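/- Let k ≥ 2 be an integer. Every symmetric polynomial matrix τ whose entries have total degree at most k can be written as τ = def v + x^⊥(x^⊥)ᵀ q, where v = (v₁, v₂) is a polynomial vector field with components of total degree at most k+1 and q is a polynomial of total degree at most k−2, and x^⊥(x^⊥)ᵀ q denotes the symmetric matrix with (i,j)-entry (x^⊥)ᵢ·(x^⊥)ⱼ·q. -/

import Mathlib

open MvPolynomial Matrix

/-- Real polynomials in two variables. -/
abbrev P2 := MvPolynomial (Fin 2) ℝ

/-- The matrix `curl v` of a polynomial vector field, defined row-wise:
`(curl v)_{i1} = ∂₂ vᵢ`, `(curl v)_{i2} = -∂₁ vᵢ`. -/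
noncomputable def pcurl (v : Fin 2 → P2) : Matrix (Fin 2) (Fin 2) P2 :=
  Matrix.of fun i j =>
    if j = 0 then pderiv (1 : Fin 2) (v i) else -(pderiv (0 : Fin 2) (v i))

/-- `sym curl v := (curl v + (curl v)ᵀ)/2`. -/
noncomputable def psymCurl (v : Fin 2 → P2) : Matrix (Fin 2) (Fin 2) P2 :=
  (1 / 2 : ℝ) • (pcurl v + (pcurl v)ᵀ)

/-- `div div τ := Σ_{i,j} ∂ᵢ∂ⱼ τ_{ij}`. -/
noncomputable def pdivDiv (τ : Matrix (Fin 2) (Fin 2) P2) : P2 :=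
  ∑ i : Fin 2, ∑ j : Fin 2, pderiv i (pderiv j (τ i j))

/-- The matrix `x xᵀ q` with `(i,j)`-entry `Xᵢ · Xⱼ · q`. -/
noncomputable def xxT (q : P2) : Matrix (Fin 2) (Fin 2) P2 :=
  Matrix.of fun i j => X i * X j * q

/-- The polynomial vector `x^⊥ = (X₂, -X₁)`. -/
noncomputable def xPerp : Fin 2 → P2 := ![X 1, -X 0]

/-- `rot τ`, with components `(rot τ)ᵢ = ∂₁ τ_{i2} - ∂₂ τ_{i1}`. -/
noncomputable def prot (τ : Matrix (Fin 2) (Fin 2) P2) : Fin 2 → P2 :=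
  fun i => pderiv (0 : Fin 2) (τ i 1) - pderiv (1 : Fin 2) (τ i 0)

/-- The Hessian matrix `∇²q` with entries `∂ᵢ∂ⱼ q`. -/
noncomputable def phess (q : P2) : Matrix (Fin 2) (Fin 2) P2 :=
  Matrix.of fun i j => pderiv i (pderiv j q)

/-- `sym(x^⊥ ⊗ v)`, the symmetric matrix with `(i,j)`-entry
`((x^⊥)ᵢ vⱼ + vᵢ (x^⊥)ⱼ)/2`. -/
noncomputable def symTen (v : Fin 2 → P2) : Matrix (Fin 2) (Fin 2) P2 :=
  Matrix.of fun i j => (1 / 2 : ℝ) • (xPerp i * v j + v i * xPerp j)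

/-- The gradient matrix `∇v` with entries `(∇v)_{ij} = ∂ⱼ vᵢ`. -/
noncomputable def pgrad (v : Fin 2 → P2) : Matrix (Fin 2) (Fin 2) P2 :=
  Matrix.of fun i j => pderiv j (v i)

/-- The symmetric gradient `def v := (∇v + (∇v)ᵀ)/2`. -/
noncomputable def pdef (v : Fin 2 → P2) : Matrix (Fin 2) (Fin 2) P2 :=
  (1 / 2 : ℝ) • (pgrad v + (pgrad v)ᵀ)

/-- The matrix `x^⊥ (x^⊥)ᵀ q` with `(i,j)`-entry `(x^⊥)ᵢ (x^⊥)ⱼ q`. -/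
noncomputable def xPerpxPerpT (q : P2) : Matrix (Fin 2) (Fin 2) P2 :=
  Matrix.of fun i j => xPerp i * xPerp j * q

/-- `rot rot τ := ∂₁(rot τ)₂ − ∂₂(rot τ)₁`. -/
noncomputable def protRot (τ : Matrix (Fin 2) (Fin 2) P2) : P2 :=
  pderiv (0 : Fin 2) (prot τ 1) - pderiv (1 : Fin 2) (prot τ 0)

/-!
Let `L q := rot rot (x^⊥ (x^⊥)ᵀ q)`. It equals `div div (x xᵀ q)`, which multiplies a homogeneous
polynomial of degree `n` by `(n + 2) (n + 3)`; inverting `L` monomial by monomial gives `q` of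
degree at most `deg (rot rot τ) ≤ k - 2` with `L q = rot rot τ`.

The remainder `σ = τ - x^⊥ (x^⊥)ᵀ q` is symmetric with `rot rot σ = 0`, the compatibility
condition for `σ = def v`. Integrating `∂₁ v₁ = σ₁₁` in `x₁` and `∂₂ v₂ = σ₂₂` in `x₂`, the
off-diagonal equation leaves a polynomial `g` with `∂₁ ∂₂ g = -rot rot σ = 0` to be split as
`a + b` with `∂₁ a = 0` and `∂₂ b = 0`; these are the missing constants of integration.
-/

namespace Finsupp

variable {σ : Type*}

theorem sum_add_single_one (m : σ →₀ ℕ) (i : σ) :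
    ((m + single i 1).sum fun _ e => e) = (m.sum fun _ e => e) + 1 := by
  rw [sum_add_index' (fun _ => rfl) (fun _ _ _ => rfl), sum_single_index rfl]

theorem exists_eq_add_single_one {m : σ →₀ ℕ} {i : σ} (h : m i ≠ 0) :
    ∃ m', m = m' + single i 1 :=
  ⟨m - single i 1, (tsub_add_cancel_of_le (by simpa [Nat.one_le_iff_ne_zero])).symm⟩

end Finsupp

namespace MvPolynomial

section CommSemiring

variable {σ R : Type*} [CommSemiring R]

theorem pderiv_pderiv_comm (i j : σ) (p : MvPolynomial σ R) :
    pderiv i (pderiv j p) = pderiv j (pderiv i p) := by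
  obtain rfl | hij := eq_or_ne i j
  · rfl
  ext m
  simp only [coeff_pderiv, Finsupp.add_apply, Finsupp.single_eq_of_ne hij,
    Finsupp.single_eq_of_ne hij.symm, add_zero, add_right_comm m]
  ring

theorem totalDegree_pderiv_le (i : σ) (p : MvPolynomial σ R) :
    (pderiv i p).totalDegree ≤ p.totalDegree - 1 := by
  refine Finset.sup_le fun m hm => ?_
  have hp : m + Finsupp.single i 1 ∈ p.support := by
    rw [mem_support_iff, coeff_pderiv] at hm
    exact mem_support_iff.mpr (left_ne_zero_of_mul hm)
  have := le_totalDegree hp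
  rw [Finsupp.sum_add_single_one] at this
  omega

theorem pderiv_pderiv_X_mul_X_mul_monomial (i j : σ) (m : σ →₀ ℕ) (c : R) :
    pderiv i (pderiv j (X i * X j * monomial m c)) =
      monomial m (c * (((m + Finsupp.single i 1 : σ →₀ ℕ) j + 1) * (m i + 1))) := by
  have : X i * X j * monomial m c = monomial (m + Finsupp.single i 1 + Finsupp.single j 1) c := by
    simp only [X, monomial_mul, one_mul, add_comm, add_left_comm]
  rw [this, pderiv_monomial, add_tsub_cancel_right, pderiv_monomial, add_tsub_cancel_right]
  simp only [Finsupp.add_apply, Finsupp.single_eq_same]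
  congr 1
  push_cast
  ring

end CommSemiring

section CommRing

variable {σ R : Type*} [CommRing R] [NoZeroDivisors R] [CharZero R]

theorem exists_add_eq_of_pderiv_pderiv_eq_zero {i j : σ} (hij : i ≠ j) {g : MvPolynomial σ R}
    (hg : pderiv i (pderiv j g) = 0) :
    ∃ a b : MvPolynomial σ R, pderiv i a = 0 ∧ pderiv j b = 0 ∧ a + b = g ∧
      a.totalDegree ≤ g.totalDegree ∧ b.totalDegree ≤ g.totalDegree := by
  classical
  set a := ∑ m ∈ g.support with m i = 0, monomial m (coeff m g)
  have coeff_a (m : σ →₀ ℕ) : coeff m a = if m i = 0 then coeff m g else 0 := by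
    simp only [a, coeff_sum, coeff_monomial, Finset.sum_ite_eq', Finset.mem_filter,
      mem_support_iff]
    split_ifs <;> simp_all
  have coeff_g (m : σ →₀ ℕ) : coeff (m + Finsupp.single i 1 + Finsupp.single j 1) g = 0 := by
    have := congrArg (coeff m) hg
    rw [coeff_pderiv, coeff_pderiv, coeff_zero] at this
    simpa only [mul_eq_zero, Nat.cast_add_one_ne_zero, or_false] using this
  refine ⟨a, g - a, ?_, ?_, add_sub_cancel _ _, ?_, ?_⟩
  · ext m
    simp [coeff_pderiv, coeff_a]
  · ext m
    rw [coeff_pderiv, coeff_sub, coeff_a, coeff_zero]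
    split_ifs with h
    · rw [sub_self, zero_mul]
    · have hi : m i ≠ 0 := by simpa [Finsupp.single_eq_of_ne hij] using h
      obtain ⟨m', rfl⟩ := Finsupp.exists_eq_add_single_one hi
      rw [coeff_g, sub_zero, zero_mul]
  · refine totalDegree_le_of_support_subset fun m => ?_
    simp only [mem_support_iff, coeff_a]
    split_ifs <;> simp
  · refine totalDegree_le_of_support_subset fun m => ?_
    simp only [mem_support_iff, coeff_sub, coeff_a]
    split_ifs <;> simp

end CommRing

section Field

variable {σ K : Type*} [Field K]

noncomputable def pintegral (i : σ) (p : MvPolynomial σ K) : MvPolynomial σ K :=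
  ∑ m ∈ p.support, monomial (m + Finsupp.single i 1) (coeff m p / (m i + 1))

theorem coeff_pintegral_add_single (i : σ) (p : MvPolynomial σ K) (m : σ →₀ ℕ) :
    coeff (m + Finsupp.single i 1) (pintegral i p) = coeff m p / (m i + 1) := by
  classical
  simp only [pintegral, coeff_sum, coeff_monomial, add_left_inj, Finset.sum_ite_eq',
    mem_support_iff]
  split_ifs with h
  · rfl
  · simp [not_not.mp h]

theorem coeff_pintegral_of_eq_zero (i : σ) (p : MvPolynomial σ K) {m : σ →₀ ℕ} (hm : m i = 0) :
    coeff m (pintegral i p) = 0 := by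
  classical
  refine (coeff_sum _ _ _).trans (Finset.sum_eq_zero fun m' _ => ?_)
  rw [coeff_monomial, if_neg]
  rintro rfl
  simp at hm

theorem pderiv_pintegral_of_ne {i j : σ} (hij : i ≠ j) (p : MvPolynomial σ K) :
    pderiv j (pintegral i p) = pintegral i (pderiv j p) := by
  ext m
  obtain hm | hm := eq_or_ne (m i) 0
  · rw [coeff_pderiv, coeff_pintegral_of_eq_zero _ _ hm, coeff_pintegral_of_eq_zero, zero_mul]
    simp [Finsupp.single_eq_of_ne hij, hm]
  · obtain ⟨m, rfl⟩ := Finsupp.exists_eq_add_single_one hm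
    rw [coeff_pderiv, add_right_comm, coeff_pintegral_add_single, coeff_pintegral_add_single,
      coeff_pderiv]
    simp only [Finsupp.add_apply, Finsupp.single_eq_of_ne hij, Finsupp.single_eq_of_ne' hij,
      add_zero]
    ring

theorem totalDegree_pintegral_le (i : σ) (p : MvPolynomial σ K) :
    (pintegral i p).totalDegree ≤ p.totalDegree + 1 := by
  refine (totalDegree_finsetSum _ _).trans (Finset.sup_le fun m hm => ?_)
  refine (totalDegree_monomial_le _ _).trans ?_
  exact (Finsupp.sum_add_single_one m i).trans_le (Nat.succ_le_succ (le_totalDegree hm))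

theorem pintegral_zero (i : σ) : pintegral i (0 : MvPolynomial σ K) = 0 := by
  simp [pintegral]

theorem totalDegree_pintegral_pderiv_le (i j : σ) (p : MvPolynomial σ K) :
    (pintegral i (pderiv j p)).totalDegree ≤ p.totalDegree := by
  by_cases hp : pderiv j p = 0
  · simp [hp, pintegral_zero]
  have : p.totalDegree ≠ 0 := fun h => hp (by rw [totalDegree_eq_zero_iff_eq_C.mp h, pderiv_C])
  have := totalDegree_pderiv_le j p
  have := totalDegree_pintegral_le i (pderiv j p)
  omega

variable [CharZero K]

theorem pderiv_pintegral_self (i : σ) (p : MvPolynomial σ K) : pderiv i (pintegral i p) = p := by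
  ext m
  rw [coeff_pderiv, coeff_pintegral_add_single]
  exact div_mul_cancel₀ _ (Nat.cast_add_one_ne_zero _)

end Field

end MvPolynomial

theorem pdef_apply (v : Fin 2 → P2) (i j : Fin 2) :
    pdef v i j = (1 / 2 : ℝ) • (pderiv j (v i) + pderiv i (v j)) := rfl

theorem protRot_sub (τ τ' : Matrix (Fin 2) (Fin 2) P2) :
    protRot (τ - τ') = protRot τ - protRot τ' := by
  simp only [protRot, prot, Matrix.sub_apply, map_sub]
  ring

theorem transpose_xPerpxPerpT (q : P2) : (xPerpxPerpT q)ᵀ = xPerpxPerpT q :=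
  Matrix.ext fun i j => congrArg (· * q) (mul_comm (xPerp j) (xPerp i))

theorem totalDegree_protRot_le {τ : Matrix (Fin 2) (Fin 2) P2} {n : ℕ}
    (hτ : ∀ i j, (τ i j).totalDegree ≤ n) : (protRot τ).totalDegree ≤ n - 2 := by
  have hd (i : Fin 2) {p : P2} {d : ℕ} (hp : p.totalDegree ≤ d) :
      (pderiv i p).totalDegree ≤ d - 1 :=
    (totalDegree_pderiv_le i p).trans (Nat.sub_le_sub_right hp 1)
  have hrot (i : Fin 2) : (prot τ i).totalDegree ≤ n - 1 :=
    (totalDegree_sub _ _).trans (max_le (hd 0 (hτ i 1)) (hd 1 (hτ i 0)))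
  exact (totalDegree_sub _ _).trans (max_le (hd 0 (hrot 1)) (hd 1 (hrot 0)))

theorem totalDegree_xPerpxPerpT_apply_le (q : P2) (i j : Fin 2) :
    (xPerpxPerpT q i j).totalDegree ≤ q.totalDegree + 2 := by
  have hx (l : Fin 2) : (xPerp l).totalDegree ≤ 1 := by
    fin_cases l <;> simp [xPerp, totalDegree_neg, totalDegree_X]
  calc (xPerp i * xPerp j * q).totalDegree
      ≤ (xPerp i * xPerp j).totalDegree + q.totalDegree := totalDegree_mul _ _
    _ ≤ (xPerp i).totalDegree + (xPerp j).totalDegree + q.totalDegree := by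
      gcongr; exact totalDegree_mul _ _
    _ ≤ q.totalDegree + 2 := by linarith [hx i, hx j]

theorem protRot_xPerpxPerpT (q : P2) : protRot (xPerpxPerpT q) = pdivDiv (xxT q) := by
  have h01 : xPerpxPerpT q 0 1 = -(X 1 * X 0 * q) := show X 1 * -X 0 * q = _ by ring
  have h10 : xPerpxPerpT q 1 0 = -(X 0 * X 1 * q) := show -X 0 * X 1 * q = _ by ring
  have h11 : xPerpxPerpT q 1 1 = X 0 * X 0 * q := show -X 0 * -X 0 * q = _ by ring
  have h00 : xPerpxPerpT q 0 0 = X 1 * X 1 * q := rfl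
  simp only [protRot, prot, pdivDiv, xxT, of_apply, Fin.sum_univ_two, h00, h01, h10, h11,
    map_neg, map_sub]
  ring

theorem pdivDiv_xxT_monomial (m : Fin 2 →₀ ℕ) (c : ℝ) :
    pdivDiv (xxT (monomial m c)) =
      monomial m ((((m 0 + m 1 + 2) * (m 0 + m 1 + 3) : ℕ) : ℝ) * c) := by
  simp only [pdivDiv, xxT, Matrix.of_apply, Fin.sum_univ_two,
    pderiv_pderiv_X_mul_X_mul_monomial, ← map_add]
  congr 1
  simp only [Finsupp.add_apply, Finsupp.single_eq_same, Finsupp.single_eq_of_ne, ne_eq,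
    one_ne_zero, zero_ne_one, not_false_eq_true, add_zero]
  push_cast
  ring

theorem pdivDiv_xxT_add (p q : P2) :
    pdivDiv (xxT (p + q)) = pdivDiv (xxT p) + pdivDiv (xxT q) := by
  simp only [pdivDiv, xxT, Matrix.of_apply, mul_add, map_add, Finset.sum_add_distrib]

theorem exists_pdivDiv_xxT_eq (p : P2) :
    ∃ q : P2, q.totalDegree ≤ p.totalDegree ∧ pdivDiv (xxT q) = p := by
  let L : P2 →+ P2 := AddMonoidHom.mk' (fun q => pdivDiv (xxT q)) pdivDiv_xxT_add
  refine ⟨∑ m ∈ p.support,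
    monomial m (coeff m p / (((m 0 + m 1 + 2) * (m 0 + m 1 + 3) : ℕ) : ℝ)), ?_, ?_⟩
  · exact (totalDegree_finsetSum _ _).trans
      (Finset.sup_le fun m hm => (totalDegree_monomial_le _ _).trans (le_totalDegree hm))
  · change L _ = p
    rw [map_sum]
    conv_rhs => rw [p.as_sum]
    refine Finset.sum_congr rfl fun m _ => ?_
    simp only [L, AddMonoidHom.mk'_apply, pdivDiv_xxT_monomial]
    rw [mul_div_cancel₀]
    positivity

theorem pdef_eq_of_pderiv_eq {v : Fin 2 → P2} {τ : Matrix (Fin 2) (Fin 2) P2} (hsym : τᵀ = τ)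
    (h00 : pderiv 0 (v 0) = τ 0 0) (h11 : pderiv 1 (v 1) = τ 1 1)
    (h01 : pderiv 1 (v 0) + pderiv 0 (v 1) = τ 0 1 + τ 0 1) : pdef v = τ := by
  have half_add_self (p : P2) : (1 / 2 : ℝ) • (p + p) = p := by
    rw [← two_smul ℝ, smul_smul]; norm_num
  refine Matrix.ext (Fin.forall_fin_two.2 ⟨Fin.forall_fin_two.2 ⟨?_, ?_⟩,
    Fin.forall_fin_two.2 ⟨?_, ?_⟩⟩) <;> rw [pdef_apply]
  · rw [h00, half_add_self]
  · rw [h01, half_add_self]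
  · rw [add_comm, h01, half_add_self]
    exact (congrFun₂ hsym 0 1).symm
  · rw [h11, half_add_self]

theorem exists_pdef_eq_of_protRot_eq_zero {τ : Matrix (Fin 2) (Fin 2) P2} (hsym : τᵀ = τ)
    (hrot : protRot τ = 0) {n : ℕ} (hτ : ∀ i j, (τ i j).totalDegree ≤ n) :
    ∃ v : Fin 2 → P2, (∀ i, (v i).totalDegree ≤ n + 1) ∧ pdef v = τ := by
  have h10 : τ 1 0 = τ 0 1 := congrFun₂ hsym 0 1
  set g := τ 0 1 + τ 0 1 - pintegral 1 (pderiv 0 (τ 1 1)) - pintegral 0 (pderiv 1 (τ 0 0))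
    with hg
  have hg_mixed : pderiv 0 (pderiv 1 g) = 0 := by
    rw [← neg_eq_zero, ← hrot]
    simp only [hg, protRot, prot, map_add, map_sub, pderiv_pintegral_self,
      pderiv_pintegral_of_ne zero_ne_one, h10]
    rw [pderiv_pderiv_comm 1 0]
    ring
  have hg_deg : g.totalDegree ≤ n := by
    refine (totalDegree_sub _ _).trans (max_le ((totalDegree_sub _ _).trans (max_le ?_ ?_)) ?_)
    · exact (totalDegree_add _ _).trans (max_le (hτ 0 1) (hτ 0 1))
    · exact (totalDegree_pintegral_pderiv_le _ _ _).trans (hτ 1 1)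
    · exact (totalDegree_pintegral_pderiv_le _ _ _).trans (hτ 0 0)
  obtain ⟨a, b, ha, hb, hab, ha_deg, hb_deg⟩ :=
    exists_add_eq_of_pderiv_pderiv_eq_zero zero_ne_one hg_mixed
  refine ⟨![pintegral 0 (τ 0 0) + pintegral 1 a, pintegral 1 (τ 1 1) + pintegral 0 b], ?_,
    pdef_eq_of_pderiv_eq hsym ?_ ?_ ?_⟩
  · intro i
    fin_cases i <;> refine (totalDegree_add _ _).trans (max_le ?_ ?_)
    all_goals refine (totalDegree_pintegral_le _ _).trans (Nat.succ_le_succ ?_)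
    exacts [hτ 0 0, ha_deg.trans hg_deg, hτ 1 1, hb_deg.trans hg_deg]
  · simp [pderiv_pintegral_self, pderiv_pintegral_of_ne, ha, pintegral_zero]
  · simp [pderiv_pintegral_self, pderiv_pintegral_of_ne, hb, pintegral_zero]
  · simp only [Matrix.cons_val_zero, Matrix.cons_val_one, map_add, pderiv_pintegral_self,
      pderiv_pintegral_of_ne zero_ne_one, pderiv_pintegral_of_ne one_ne_zero]
    rw [hg] at hab
    linear_combination hab

/-- Decomposition `τ = def v + x^⊥ (x^⊥)ᵀ q` of symmetric polynomial matrices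
of degree ≤ k. -/
theorem stmt_18 (k : ℕ) (hk : 2 ≤ k) (τ : Matrix (Fin 2) (Fin 2) P2)
    (hsym : τᵀ = τ) (hdeg : ∀ i j, (τ i j).totalDegree ≤ k) :
    ∃ (v : Fin 2 → P2) (q : P2),
      (∀ i, (v i).totalDegree ≤ k + 1) ∧ q.totalDegree ≤ k - 2 ∧
      τ = pdef v + xPerpxPerpT q := by
  obtain ⟨q, hq_deg, hq⟩ := exists_pdivDiv_xxT_eq (protRot τ)
  replace hq_deg := hq_deg.trans (totalDegree_protRot_le hdeg)
  have hsym' : (τ - xPerpxPerpT q)ᵀ = τ - xPerpxPerpT q := by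
    rw [Matrix.transpose_sub, hsym, transpose_xPerpxPerpT]
  have hrot : protRot (τ - xPerpxPerpT q) = 0 := by
    rw [protRot_sub, protRot_xPerpxPerpT, hq, sub_self]
  have hdeg' (i j : Fin 2) : ((τ - xPerpxPerpT q) i j).totalDegree ≤ k :=
    (totalDegree_sub _ _).trans (max_le (hdeg i j)
      ((totalDegree_xPerpxPerpT_apply_le q i j).trans (by omega)))
  obtain ⟨v, hv_deg, hv⟩ := exists_pdef_eq_of_protRot_eq_zero hsym' hrot hdeg'
  exact ⟨v, q, hv_deg, hq_deg, by rw [hv, sub_add_cancel]⟩
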